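/- Let X₁, X₂, … be a strictly stationary and ergodic sequence of real random variables whose common distribution is not bounded above (i.e., sup{x : P(X₁ ≤ x) < 1} = ∞), let a > 0, and let (kₙ) be integers with 1 ≤ kₙ ≤ n and kₙ/n → 1. Then (1/n) Σ_{i=1}^n 1{X_{kₙ:n} − a < X_i < X_{kₙ:n}} converges to 0 almost surely as n → ∞. -/

import Mathlib

open MeasureTheory Filter Set
open scoped Topology ENNReal

noncomputable section

/-- The shift map on real sequences. -/
def seqShift (y : ℕ → ℝ) : ℕ → ℝ := fun n => y (n + 1)

/-- The path map associating to each sample point the sequence of observations. -/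
def path {Ω : Type*} (X : ℕ → Ω → ℝ) (ω : Ω) : ℕ → ℝ := fun n => X n ω

/-- The `k`-th smallest value (k counted from 1) among `x 0, …, x (n-1)`. -/
def ordStat (k n : ℕ) (x : ℕ → ℝ) : ℝ :=
  ((List.ofFn (fun i : Fin n => x i)).insertionSort (· ≤ ·)).getD (k - 1) 0

/-- Number of observations among `x 0, …, x (n-1)` in the left `a`-neighborhood of the
`k`-th order statistic. -/
def nearCount (k n : ℕ) (a : ℝ) (x : ℕ → ℝ) : ℕ :=
  ((Finset.range n).filter
    (fun i => ordStat k n x - a < x i ∧ x i < ordStat k n x)).card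

/-- Sum of observations among `x 0, …, x (n-1)` in the left `a`-neighborhood of the
`k`-th order statistic. -/
def nearSum (k n : ℕ) (a : ℝ) (x : ℕ → ℝ) : ℝ :=
  ∑ i ∈ Finset.range n,
    if ordStat k n x - a < x i ∧ x i < ordStat k n x then x i else 0

/-- The right endpoint `sup {x : P(X ≤ x) < 1}` of the support of `X`, as an extended real. -/
def rightEndpoint {Ω : Type*} [MeasurableSpace Ω] (μ : Measure Ω) (X : Ω → ℝ) : EReal :=
  sSup ((fun r : ℝ => (r : EReal)) '' {r : ℝ | μ {ω | X ω ≤ r} < 1})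

/-!
Let `F` be the distribution function of `X 0`, fix `ε > 0` and levels `m₀ + a ≤ m₁` with
`F m₀ > 1 - ε`. By Birkhoff's ergodic theorem for bounded observables (a consequence of the
maximal ergodic theorem), the fraction of the first `n` observations that are `≤ m` tends to
`F m` almost surely. As `F m₁ < 1` while `kₙ / n → 1`, eventually fewer than `kₙ` observations
are `≤ m₁`, so `X_{kₙ:n} > m₁ ≥ m₀ + a`. Then the observations in `(X_{kₙ:n} - a, X_{kₙ:n})` and
those `≤ m₀` are disjoint and all lie strictly below `X_{kₙ:n}`, so there are fewer than
`kₙ ≤ n` of them altogether, and the near ones make up at most a fraction `1 - F m₀ + o(1) < ε`.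
-/

open Finset ProbabilityTheory

namespace List

variable {α : Type*} [LinearOrder α] {l : List α}

lemma Pairwise.countP_lt_getElem_le (hl : l.Pairwise (· ≤ ·)) {j : ℕ} (hj : j < l.length) :
    l.countP (· < l[j]) ≤ j := by
  have hdrop : (l.drop j).countP (· < l[j]) = 0 := by
    rw [countP_eq_zero, drop_eq_getElem_cons hj]
    intro b hb
    have hsorted : (l[j] :: l.drop (j + 1)).Pairwise (· ≤ ·) :=
      drop_eq_getElem_cons hj ▸ hl.sublist (drop_sublist j l)
    rcases mem_cons.1 hb with rfl | hb
    · simp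
    · simpa using (pairwise_cons.1 hsorted).1 b hb
  calc l.countP (· < l[j]) = (l.take j).countP (· < l[j]) + (l.drop j).countP (· < l[j]) := by
        rw [← countP_append, take_append_drop]
    _ ≤ j := by
        rw [hdrop, add_zero]
        exact countP_le_length.trans (length_take_le j l)

lemma Pairwise.lt_countP_le_of_getElem_le (hl : l.Pairwise (· ≤ ·)) {j : ℕ} (hj : j < l.length)
    {M : α} (hM : l[j] ≤ M) : j < l.countP (· ≤ M) := by
  have htake : (l.take (j + 1)).countP (· ≤ M) = j + 1 := by
    rw [countP_eq_length.2, length_take, min_eq_left hj]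
    intro b hb
    obtain ⟨i, hi, rfl⟩ := getElem_of_mem hb
    rw [length_take] at hi
    simp only [getElem_take, decide_eq_true_eq]
    exact (hl.rel_get_of_le (a := ⟨i, by omega⟩) (b := ⟨j, hj⟩) (by simp; omega)).trans hM
  calc j < (l.take (j + 1)).countP (· ≤ M) := by omega
    _ ≤ l.countP (· ≤ M) := (take_sublist _ _).countP_le

end List

lemma card_filter_range_eq_countP_ofFn {β : Type*} (x : ℕ → β) (n : ℕ) (p : β → Prop)
    [DecidablePred p] :
    #{i ∈ range n | p (x i)} = (List.ofFn fun i : Fin n => x i).countP (p ·) := by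
  induction n with
  | zero => simp
  | succ n ih =>
    rw [List.ofFn_succ', List.concat_eq_append, List.countP_append]
    simp only [Fin.val_castSucc, Fin.val_last, ← ih, range_add_one, filter_insert]
    by_cases h : p (x n) <;> simp [h, add_comm]

section OrderStatistics

variable (x : ℕ → ℝ) {k n : ℕ}

def sortedPrefix (n : ℕ) : List ℝ := (List.ofFn fun i : Fin n => x i).insertionSort (· ≤ ·)

lemma pairwise_sortedPrefix (n : ℕ) : (sortedPrefix x n).Pairwise (· ≤ ·) :=
  List.pairwise_insertionSort _ _

lemma card_filter_range_eq_countP_sortedPrefix (n : ℕ) (p : ℝ → Prop) [DecidablePred p] :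
    #{i ∈ range n | p (x i)} = (sortedPrefix x n).countP (p ·) := by
  rw [sortedPrefix, (List.perm_insertionSort _ _).countP_eq, card_filter_range_eq_countP_ofFn]

lemma ordStat_eq_getElem (hk : 1 ≤ k) (hkn : k ≤ n) :
    ∃ h : k - 1 < (sortedPrefix x n).length, ordStat k n x = (sortedPrefix x n)[k - 1] :=
  ⟨by simp [sortedPrefix]; omega, List.getD_eq_getElem ..⟩

lemma card_filter_lt_ordStat_lt (hk : 1 ≤ k) (hkn : k ≤ n) :
    #{i ∈ range n | x i < ordStat k n x} < k := by
  obtain ⟨h, hx⟩ := ordStat_eq_getElem x hk hkn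
  rw [card_filter_range_eq_countP_sortedPrefix x n (· < ordStat k n x), hx]
  have := (pairwise_sortedPrefix x n).countP_lt_getElem_le h
  omega

lemma lt_ordStat_of_card_filter_le_lt (hk : 1 ≤ k) (hkn : k ≤ n) {M : ℝ}
    (hM : #{i ∈ range n | x i ≤ M} < k) : M < ordStat k n x := by
  obtain ⟨h, hx⟩ := ordStat_eq_getElem x hk hkn
  by_contra! hle
  rw [hx] at hle
  have := (pairwise_sortedPrefix x n).lt_countP_le_of_getElem_le h hle
  rw [card_filter_range_eq_countP_sortedPrefix x n (· ≤ M)] at hM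
  omega

lemma nearCount_add_card_filter_le_lt (hk : 1 ≤ k) (hkn : k ≤ n) {a m : ℝ} (ha : 0 ≤ a)
    (hm : m < ordStat k n x - a) : nearCount k n a x + #{i ∈ range n | x i ≤ m} < k := by
  calc nearCount k n a x + #{i ∈ range n | x i ≤ m}
      = #({i ∈ range n | ordStat k n x - a < x i ∧ x i < ordStat k n x} ∪
          {i ∈ range n | x i ≤ m}) := by
        refine (card_union_of_disjoint (disjoint_filter.2 fun i _ hnear hle => ?_)).symm
        linarith [hnear.1]
    _ ≤ #{i ∈ range n | x i < ordStat k n x} := by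
        rw [← filter_or]
        refine card_le_card fun i hi => ?_
        simp only [mem_filter] at hi ⊢
        rcases hi with ⟨hi, hnear | hle⟩
        exacts [⟨hi, hnear.2⟩, ⟨hi, by linarith⟩]
    _ < k := card_filter_lt_ordStat_lt x hk hkn

end OrderStatistics

section NearCount

variable {x : ℕ → ℝ} {k : ℕ → ℕ}

lemma eventually_lt_ordStat {M p : ℝ} (hp : p < 1)
    (hfreq : Tendsto (fun n => (#{i ∈ range n | x i ≤ M} : ℝ) / n) atTop (𝓝 p))
    (hk : ∀ᶠ n in atTop, 1 ≤ k n ∧ k n ≤ n)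
    (hk1 : Tendsto (fun n => (k n : ℝ) / n) atTop (𝓝 1)) :
    ∀ᶠ n in atTop, M < ordStat (k n) n x := by
  have hp' : p < (1 + p) / 2 := by linarith
  have hp'' : (1 + p) / 2 < 1 := by linarith
  filter_upwards [hfreq.eventually_lt_const hp', hk1.eventually_const_lt hp'', hk]
    with n hfreq_n hk_n ⟨hk_pos, hkn⟩
  refine lt_ordStat_of_card_filter_le_lt x hk_pos hkn ?_
  have hn : (0 : ℝ) < n := by norm_cast; omega
  exact_mod_cast (div_lt_div_iff_of_pos_right hn).1 (hfreq_n.trans hk_n)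

theorem tendsto_nearCount_div_nhds_zero {F : ℝ → ℝ} (hF : ∀ M, F M < 1)
    (hF1 : Tendsto F atTop (𝓝 1))
    (hfreq : ∀ m : ℕ, Tendsto (fun n => (#{i ∈ range n | x i ≤ m} : ℝ) / n) atTop (𝓝 (F m)))
    (hk : ∀ᶠ n in atTop, 1 ≤ k n ∧ k n ≤ n)
    (hk1 : Tendsto (fun n => (k n : ℝ) / n) atTop (𝓝 1)) {a : ℝ} (ha : 0 ≤ a) :
    Tendsto (fun n => (nearCount (k n) n a x : ℝ) / n) atTop (𝓝 0) := by
  refine tendsto_order.2 ⟨fun b hb => .of_forall fun n => hb.trans_le (by positivity),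
    fun ε hε => ?_⟩
  obtain ⟨m₀, hm₀⟩ := ((hF1.comp tendsto_natCast_atTop_atTop).eventually_const_lt
    (sub_lt_self 1 hε)).exists
  obtain ⟨m₁, hm₁⟩ := exists_nat_ge ((m₀ : ℝ) + a)
  filter_upwards [eventually_lt_ordStat (hF m₁) (hfreq m₁) hk hk1,
    (hfreq m₀).eventually_const_lt hm₀, hk] with n hord hfreq₀ ⟨hk_pos, hkn⟩
  have hcount := nearCount_add_card_filter_le_lt x hk_pos hkn ha (m := m₀) (by linarith)
  have hn : (0 : ℝ) < n := by norm_cast; omega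
  have : (nearCount (k n) n a x : ℝ) + #{i ∈ range n | x i ≤ m₀} < n := by
    exact_mod_cast hcount.trans_le hkn
  rw [div_lt_iff₀ hn]
  rw [lt_div_iff₀ hn] at hfreq₀
  linarith

end NearCount

section MaximalErgodic

variable {α : Type*} {T : α → α} {f : α → ℝ}

def birkhoffMax (T : α → α) (f : α → ℝ) (n : ℕ) (x : α) : ℝ :=
  (range (n + 1)).sup' nonempty_range_add_one fun j => birkhoffSum T f j x

lemma birkhoffSum_le_birkhoffMax {j n : ℕ} (hj : j ≤ n) (x : α) :
    birkhoffSum T f j x ≤ birkhoffMax T f n x :=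
  le_sup' (fun j => birkhoffSum T f j x) (mem_range.2 (Nat.lt_succ_of_le hj))

lemma birkhoffMax_nonneg (n : ℕ) (x : α) : 0 ≤ birkhoffMax T f n x := by
  simpa using birkhoffSum_le_birkhoffMax (T := T) (f := f) n.zero_le x

lemma monotone_birkhoffMax (x : α) : Monotone (birkhoffMax T f · x) := fun _ _ hmn =>
  sup'_le _ _ fun _ hj => birkhoffSum_le_birkhoffMax (by simp at hj; omega) x

lemma birkhoffMax_le_add_birkhoffMax_apply {n : ℕ} {x : α} (hx : 0 < birkhoffMax T f n x) :
    birkhoffMax T f n x ≤ f x + birkhoffMax T f n (T x) := by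
  obtain ⟨j, hj, hmax⟩ := exists_mem_eq_sup' nonempty_range_add_one fun j => birkhoffSum T f j x
  rw [birkhoffMax, hmax] at hx ⊢
  cases j with
  | zero => simp at hx
  | succ j =>
    rw [birkhoffSum_succ']
    gcongr
    exact birkhoffSum_le_birkhoffMax (by simp at hj; omega) _

variable [MeasurableSpace α] {μ : Measure α}

lemma measurable_birkhoffSum (hT : Measurable T) (hf : Measurable f) (n : ℕ) :
    Measurable (birkhoffSum T f n) :=
  Finset.measurable_sum _ fun k _ => hf.comp (hT.iterate k)

lemma measurable_birkhoffMax (hT : Measurable T) (hf : Measurable f) (n : ℕ) :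
    Measurable (birkhoffMax T f n) :=
  Finset.measurable_range_sup'' fun j _ => measurable_birkhoffSum hT hf j

lemma MeasureTheory.MeasurePreserving.integrable_birkhoffMax (hT : MeasurePreserving T μ μ)
    (hf : Measurable f) (hfi : Integrable f μ) (n : ℕ) : Integrable (birkhoffMax T f n) μ := by
  refine Integrable.mono' (g := fun x => ∑ k ∈ range n, |f (T^[k] x)|)
    (integrable_finsetSum _ fun k _ => ((hT.iterate k).integrable_comp_of_integrable hfi).abs)
    (measurable_birkhoffMax hT.measurable hf n).aestronglyMeasurable (.of_forall fun x => ?_)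
  rw [Real.norm_of_nonneg (birkhoffMax_nonneg n x)]
  refine sup'_le _ _ fun j hj => ?_
  calc birkhoffSum T f j x ≤ ∑ k ∈ range j, |f (T^[k] x)| := sum_le_sum fun k _ => le_abs_self _
    _ ≤ ∑ k ∈ range n, |f (T^[k] x)| :=
      sum_le_sum_of_subset_of_nonneg (range_subset_range.2 (by simp at hj; omega))
        fun _ _ _ => abs_nonneg _

/-- Garsia's argument: on `{M > 0}` we have `M ≤ f + M ∘ T`, while `M ∘ T ≥ 0` has the same
integral as `M`, which vanishes off `{M > 0}`. -/
theorem MeasureTheory.MeasurePreserving.setIntegral_birkhoffMax_pos_nonneg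
    (hT : MeasurePreserving T μ μ) (hf : Measurable f) (hfi : Integrable f μ) (n : ℕ) :
    0 ≤ ∫ x in {x | 0 < birkhoffMax T f n x}, f x ∂μ := by
  set M := birkhoffMax T f n
  set E := {x | 0 < M x}
  have hMm : Measurable M := measurable_birkhoffMax hT.measurable hf n
  have hM : Integrable M μ := hT.integrable_birkhoffMax hf hfi n
  have hMT : Integrable (M ∘ T) μ := hT.integrable_comp_of_integrable hM
  have hE : MeasurableSet E := measurableSet_lt measurable_const hMm
  calc 0 = ∫ x, M x ∂μ - ∫ x, M (T x) ∂μ := by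
        rw [← integral_map hT.measurable.aemeasurable hMm.aestronglyMeasurable, hT.map_eq,
          sub_self]
    _ ≤ ∫ x in E, M x ∂μ - ∫ x in E, M (T x) ∂μ := by
        refine sub_le_sub (le_of_eq ?_) (setIntegral_le_integral hMT
          (.of_forall fun x => birkhoffMax_nonneg n (T x)))
        exact (setIntegral_eq_integral_of_forall_compl_eq_zero fun x hx =>
          le_antisymm (not_lt.1 hx) (birkhoffMax_nonneg n x)).symm
    _ = ∫ x in E, (M x - M (T x)) ∂μ := (integral_sub hM.integrableOn hMT.integrableOn).symm
    _ ≤ ∫ x in E, f x ∂μ := setIntegral_mono_on (hM.sub hMT).integrableOn hfi.integrableOn hE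
        fun x hx => by linarith [birkhoffMax_le_add_birkhoffMax_apply hx]

theorem MeasureTheory.MeasurePreserving.integral_nonneg_of_ae_exists_birkhoffSum_pos
    (hT : MeasurePreserving T μ μ) (hf : Measurable f) (hfi : Integrable f μ)
    (h : ∀ᵐ x ∂μ, ∃ n, 0 < birkhoffSum T f n x) : 0 ≤ ∫ x, f x ∂μ := by
  have hcover : ∀ᵐ x ∂μ, x ∈ ⋃ n, {x | 0 < birkhoffMax T f n x} :=
    h.mono fun x ⟨n, hn⟩ => mem_iUnion.2 ⟨n, hn.trans_le (birkhoffSum_le_birkhoffMax le_rfl x)⟩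
  have hlim := tendsto_setIntegral_of_monotone (s := fun n => {x | 0 < birkhoffMax T f n x})
    (fun n => measurableSet_lt measurable_const (measurable_birkhoffMax hT.measurable hf n))
    (fun m n hmn x hx => hx.trans_le (monotone_birkhoffMax x hmn)) hfi.integrableOn
  rw [Measure.restrict_eq_self_of_ae_mem hcover] at hlim
  exact ge_of_tendsto hlim (.of_forall fun n => hT.setIntegral_birkhoffMax_pos_nonneg hf hfi n)

end MaximalErgodic

section PointwiseErgodic

lemma limsup_eq_of_tendsto_sub {ι : Type*} {l : Filter ι} [l.NeBot] {u v : ι → ℝ} {C : ℝ}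
    (hu : ∀ i, |u i| ≤ C) (hv : ∀ i, |v i| ≤ C) (h : Tendsto (u - v) l (𝓝 0)) :
    limsup u l = limsup v l := by
  have key : ∀ {u v : ι → ℝ}, (∀ i, |u i| ≤ C) → (∀ i, |v i| ≤ C) →
      Tendsto (u - v) l (𝓝 0) → limsup u l ≤ limsup v l := by
    intro u v hu hv h
    calc limsup u l = limsup (v + (u - v)) l := by rw [add_sub_cancel]
      _ ≤ limsup v l + limsup (u - v) l :=
        limsup_add_le (isBoundedUnder_of ⟨-C, fun i => (abs_le.1 (hv i)).1⟩)
          (isBoundedUnder_of ⟨C, fun i => (abs_le.1 (hv i)).2⟩) h.isCoboundedUnder_le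
          h.isBoundedUnder_le
      _ = limsup v l := by rw [h.limsup_eq, add_zero]
  exact le_antisymm (key hu hv h) (key hv hu (by rw [← neg_sub, ← neg_zero]; exact h.neg))

variable {α : Type*} {T : α → α} {f : α → ℝ} {C : ℝ}

lemma abs_birkhoffAverage_le (hC : ∀ x, |f x| ≤ C) (n : ℕ) (x : α) :
    |birkhoffAverage ℝ T f n x| ≤ C := by
  rcases n.eq_zero_or_pos with rfl | hn
  · simpa using (abs_nonneg _).trans (hC x)
  · rw [birkhoffAverage, birkhoffSum, smul_eq_mul, abs_mul, abs_inv, Nat.abs_cast,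
      inv_mul_le_iff₀ (by positivity)]
    calc |∑ k ∈ range n, f (T^[k] x)| ≤ ∑ k ∈ range n, |f (T^[k] x)| := abs_sum_le_sum_abs _ _
      _ ≤ ∑ _k ∈ range n, C := sum_le_sum fun k _ => hC _
      _ = n * C := by simp

lemma limsup_birkhoffAverage_apply (hC : ∀ x, |f x| ≤ C) (x : α) :
    limsup (birkhoffAverage ℝ T f · (T x)) atTop = limsup (birkhoffAverage ℝ T f · x) atTop :=
  limsup_eq_of_tendsto_sub (abs_birkhoffAverage_le hC · _) (abs_birkhoffAverage_le hC · _)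
    (tendsto_birkhoffAverage_apply_sub_birkhoffAverage' ℝ
      (isBounded_iff_forall_norm_le.2 ⟨C, by rintro _ ⟨x, rfl⟩; exact hC x⟩) T x)

variable [MeasurableSpace α] {μ : Measure α} [IsProbabilityMeasure μ]

lemma measurable_birkhoffAverage (hT : Measurable T) (hf : Measurable f) (n : ℕ) :
    Measurable (birkhoffAverage ℝ T f n) :=
  (measurable_birkhoffSum hT hf n).const_smul (n : ℝ)⁻¹

/-- The limsup of the averages is `T`-invariant, hence a.e. equal to a constant `c`; for
`ε > 0` every point then has a positive Birkhoff sum of `f - (c - ε)`, so `c - ε ≤ ∫ f`. -/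
theorem Ergodic.ae_limsup_birkhoffAverage_le (herg : Ergodic T μ) (hf : Measurable f)
    (hC : ∀ x, |f x| ≤ C) :
    ∀ᵐ x ∂μ, limsup (birkhoffAverage ℝ T f · x) atTop ≤ ∫ x, f x ∂μ := by
  have hL : Measurable fun x => limsup (birkhoffAverage ℝ T f · x) atTop :=
    .limsup fun n => measurable_birkhoffAverage herg.measurable hf n
  obtain ⟨c, hc⟩ := herg.ae_eq_const_of_ae_eq_comp₀ hL.nullMeasurable
    (.of_forall fun x => limsup_birkhoffAverage_apply hC x)
  suffices c ≤ ∫ x, f x ∂μ from hc.mono fun x hx => hx.trans_le this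
  refine le_of_forall_pos_le_add fun ε hε => ?_
  have hfi : Integrable f μ := .of_bound hf.aestronglyMeasurable C (.of_forall hC)
  have hpos : ∀ᵐ x ∂μ, ∃ n, 0 < birkhoffSum T (fun y => f y - (c - ε)) n x := by
    filter_upwards [hc] with x hx
    have hlt : c - ε < limsup (birkhoffAverage ℝ T f · x) atTop := by
      rw [hx]; simpa using hε
    obtain ⟨n, hn, hn0⟩ := ((frequently_lt_of_lt_limsup (isCoboundedUnder_le_of_le atTop
      fun n => (abs_le.1 (abs_birkhoffAverage_le hC n x)).1) hlt).and_eventually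
      (eventually_gt_atTop 0)).exists
    refine ⟨n, ?_⟩
    rw [birkhoffAverage, smul_eq_mul, lt_inv_mul_iff₀ (by positivity)] at hn
    change 0 < birkhoffSum T (f - fun _ => c - ε) n x
    rw [birkhoffSum_sub, birkhoffSum_of_comp_eq (φ := fun _ => c - ε) rfl]
    simpa using hn
  have := herg.toMeasurePreserving.integral_nonneg_of_ae_exists_birkhoffSum_pos
    (hf.sub_const _) (hfi.sub (integrable_const _)) hpos
  rw [integral_sub hfi (integrable_const _), integral_const, probReal_univ, one_smul] at this
  linarith

theorem Ergodic.ae_tendsto_birkhoffAverage (herg : Ergodic T μ) (hf : Measurable f)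
    (hC : ∀ x, |f x| ≤ C) :
    ∀ᵐ x ∂μ, Tendsto (birkhoffAverage ℝ T f · x) atTop (𝓝 (∫ x, f x ∂μ)) := by
  have hneg := herg.ae_limsup_birkhoffAverage_le hf.neg (f := -f) (fun x => by simpa using hC x)
  filter_upwards [herg.ae_limsup_birkhoffAverage_le hf hC, hneg] with x hup hlow
  simp only [birkhoffAverage_neg, Pi.neg_apply, integral_neg] at hlow
  have hbdd (g : ℕ → ℝ) (hg : ∀ n, |g n| ≤ C) : IsBoundedUnder (· ≤ ·) atTop g :=
    isBoundedUnder_of ⟨C, fun n => (abs_le.1 (hg n)).2⟩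
  refine tendsto_order.2 ⟨fun b hb => ?_, fun b hb => eventually_lt_of_limsup_lt (hup.trans_lt hb)
    (hbdd _ (abs_birkhoffAverage_le hC · x))⟩
  refine (eventually_lt_of_limsup_lt (hlow.trans_lt (neg_lt_neg hb))
    (hbdd _ fun n => ?_)).mono fun n hn => neg_lt_neg_iff.1 hn
  simpa using abs_birkhoffAverage_le hC n x

end PointwiseErgodic

section StationarySequence

lemma seqShift_iterate_apply (i j : ℕ) (y : ℕ → ℝ) : seqShift^[i] y j = y (j + i) := by
  induction i generalizing j with
  | zero => rfl
  | succ i ih => rw [Function.iterate_succ_apply', seqShift, ih, add_right_comm, add_assoc]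

lemma birkhoffAverage_seqShift_indicator (M : ℝ) (n : ℕ) (y : ℕ → ℝ) :
    birkhoffAverage ℝ seqShift ({z : ℕ → ℝ | z 0 ≤ M}.indicator 1) n y =
      (#{i ∈ range n | y i ≤ M} : ℝ) / n := by
  simp [birkhoffAverage, birkhoffSum, Set.indicator_apply, seqShift_iterate_apply,
    div_eq_inv_mul]

variable {Ω : Type*} [MeasurableSpace Ω] {μ : Measure Ω}

lemma measure_le_lt_one_of_rightEndpoint_eq_top {Y : Ω → ℝ} (hY : rightEndpoint μ Y = ⊤)
    (M : ℝ) : μ {ω | Y ω ≤ M} < 1 := by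
  by_contra! hM
  have : rightEndpoint μ Y ≤ M := by
    refine sSup_le ?_
    rintro _ ⟨r, hr, rfl⟩
    refine EReal.coe_le_coe_iff.2 (le_of_not_gt fun hMr => ?_)
    exact (hM.trans (measure_mono fun ω hω => le_trans hω hMr.le)).not_gt hr
  exact (EReal.coe_lt_top M).not_ge (hY ▸ this)

variable [IsProbabilityMeasure μ]

lemma ae_tendsto_card_filter_le_div {X : ℕ → Ω → ℝ} (hX : ∀ n, Measurable (X n))
    (herg : Ergodic seqShift (μ.map (path X))) (M : ℝ) :
    ∀ᵐ ω ∂μ, Tendsto (fun n => (#{i ∈ range n | X i ω ≤ M} : ℝ) / n) atTop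
      (𝓝 (cdf (μ.map (X 0)) M)) := by
  have hpath : Measurable (path X) := measurable_pi_lambda _ hX
  have : IsProbabilityMeasure (μ.map (path X)) :=
    Measure.isProbabilityMeasure_map hpath.aemeasurable
  have : IsProbabilityMeasure (μ.map (X 0)) :=
    Measure.isProbabilityMeasure_map (hX 0).aemeasurable
  have hs : MeasurableSet {z : ℕ → ℝ | z 0 ≤ M} :=
    measurableSet_le (measurable_pi_apply 0) measurable_const
  have h := herg.ae_tendsto_birkhoffAverage (f := {z | z 0 ≤ M}.indicator 1)
    (measurable_const.indicator hs) (C := 1)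
    fun y => by by_cases hy : y 0 ≤ M <;> simp [hy]
  rw [integral_indicator_one hs, map_measureReal_apply hpath hs] at h
  rw [cdf_eq_real, map_measureReal_apply (hX 0) measurableSet_Iic]
  filter_upwards [ae_of_ae_map hpath.aemeasurable h] with ω hω
  simp only [birkhoffAverage_seqShift_indicator] at hω
  exact hω

lemma cdf_lt_one_of_rightEndpoint_eq_top {Y : Ω → ℝ} (hY : Measurable Y)
    (h : rightEndpoint μ Y = ⊤) (M : ℝ) : cdf (μ.map Y) M < 1 := by
  have : IsProbabilityMeasure (μ.map Y) := Measure.isProbabilityMeasure_map hY.aemeasurable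
  rw [cdf_eq_real, map_measureReal_apply hY measurableSet_Iic, measureReal_def]
  exact ENNReal.toReal_lt_of_lt_ofReal
    (ENNReal.ofReal_one ▸ measure_le_lt_one_of_rightEndpoint_eq_top h M)

end StationarySequence

theorem stmt6 {Ω : Type*} [MeasurableSpace Ω] (μ : Measure Ω) [IsProbabilityMeasure μ]
    (X : ℕ → Ω → ℝ) (hX : ∀ n, Measurable (X n))
    (herg : Ergodic seqShift (Measure.map (path X) μ))
    (hsup : rightEndpoint μ (X 0) = ⊤)
    (a : ℝ) (ha : 0 < a)
    (k : ℕ → ℕ) (hk : ∀ n, 1 ≤ n → 1 ≤ k n ∧ k n ≤ n)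
    (hk1 : Tendsto (fun n => (k n : ℝ) / n) atTop (𝓝 1)) :
    ∀ᵐ ω ∂μ, Tendsto (fun n => (nearCount (k n) n a (path X ω) : ℝ) / n) atTop (𝓝 0) := by
  have hfreq := ae_all_iff.2 fun m : ℕ => ae_tendsto_card_filter_le_div hX herg m
  filter_upwards [hfreq] with ω hω
  exact tendsto_nearCount_div_nhds_zero (cdf_lt_one_of_rightEndpoint_eq_top (hX 0) hsup)
    (tendsto_cdf_atTop _) hω ((eventually_ge_atTop 1).mono hk) hk1 ha.le
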